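/- Let p ∈ (0,1), n ≥ 1, and let h : ℤⁿ → ℝ be such that for every x ∈ ℤⁿ the sum Σ_{i ∈ ℤⁿ} p^{‖i - x‖₁} h(i) converges absolutely and equals 0 (i.e., h is a deterministic unbiased estimator of the zero function under coordinatewise discrete Laplace noise with parameter p). Then h(x) = 0 for all x ∈ ℤⁿ. -/
import Mathlib

open scoped BigOperators

private lemma zkey (p : ℝ) (hp0 : 0 < p) (a : ℤ) :
    p ^ |a - 1| + p ^ |a + 1| =
      (p + p⁻¹) * p ^ |a| + (if a = 0 then p - p⁻¹ else 0) := by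
  have hp : p ≠ 0 := ne_of_gt hp0
  rcases lt_trichotomy a 0 with hc | hc | hc
  · rw [if_neg (by omega), abs_of_neg (by omega : a - 1 < 0),
      abs_of_nonpos (by omega : a + 1 ≤ 0), abs_of_neg hc]
    rw [show -(a - 1) = -a + 1 by ring, show -(a + 1) = -a + (-1) by ring,
      zpow_add₀ hp, zpow_add₀ hp]
    simp [zpow_neg]
    ring
  · subst hc; norm_num
  · rw [if_neg (by omega), abs_of_nonneg (by omega : (0:ℤ) ≤ a - 1),
      abs_of_pos (by omega : (0:ℤ) < a + 1), abs_of_pos hc]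
    rw [show a - 1 = a + (-1) by ring, zpow_add₀ hp, zpow_add₀ hp]
    simp [zpow_neg]
    ring

/-- Uniqueness: any deterministic unbiased estimator of the zero function under
coordinatewise discrete Laplace noise is identically zero. -/
theorem discrete_laplace_unbiased_zero_unique
    (p : ℝ) (hp0 : 0 < p) (hp1 : p < 1) (n : ℕ) (hn : 1 ≤ n)
    (h : (Fin n → ℤ) → ℝ)
    (hsum : ∀ x : Fin n → ℤ,
      Summable fun i : Fin n → ℤ => p ^ (∑ j, |i j - x j|) * |h i|)
    (hzero : ∀ x : Fin n → ℤ,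
      (∑' i : Fin n → ℤ, p ^ (∑ j, |i j - x j|) * h i) = 0) :
    ∀ x : Fin n → ℤ, h x = 0 := by
  have hp : p ≠ 0 := ne_of_gt hp0
  -- summability of indicator-weighted sums
  have hS : ∀ (x : Fin n → ℤ) (P : (Fin n → ℤ) → Prop) [DecidablePred P],
      Summable fun i : Fin n → ℤ =>
        (if P i then (1:ℝ) else 0) * p ^ (∑ j, |i j - x j|) * h i := by
    intro x P _
    apply Summable.of_abs
    refine Summable.of_nonneg_of_le (fun i => abs_nonneg _) (fun i => ?_) (hsum x)
    by_cases hPi : P i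
    · rw [if_pos hPi, one_mul, abs_mul, abs_of_nonneg (zpow_nonneg hp0.le _)]
    · rw [if_neg hPi, zero_mul, zero_mul, abs_zero]
      positivity
  -- main induction
  have H : ∀ k, k ≤ n → ∀ x : Fin n → ℤ,
      (∑' i : Fin n → ℤ,
        (if ∀ j : Fin n, (j : ℕ) < k → i j = x j then (1:ℝ) else 0)
          * p ^ (∑ j, |i j - x j|) * h i) = 0 := by
    intro k
    induction k with
    | zero =>
      intro _ x
      simpa using hzero x
    | succ k IH =>
      intro hk1 x
      have hk : k < n := hk1
      set j0 : Fin n := ⟨k, hk⟩ with hj0def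
      obtain ⟨e, he⟩ : ∃ e : Fin n → ℤ, e = Pi.single j0 1 := ⟨_, rfl⟩
      have he0 : e j0 = 1 := by rw [he]; simp
      have he1 : ∀ j : Fin n, j ≠ j0 → e j = 0 := fun j hj => by
        rw [he]; simp [Pi.single_eq_of_ne hj]
      have hA := IH (le_of_lt hk) (x + e)
      have hB := IH (le_of_lt hk) (x - e)
      have hC := IH (le_of_lt hk) x
      have SA := hS (x + e)
        (fun i => ∀ j : Fin n, (j : ℕ) < k → i j = (x + e) j)
      have SB := hS (x - e)
        (fun i => ∀ j : Fin n, (j : ℕ) < k → i j = (x - e) j)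
      have SC := hS x (fun i => ∀ j : Fin n, (j : ℕ) < k → i j = x j)
      -- pointwise key identity
      have key : ∀ i : Fin n → ℤ,
          ((if ∀ j : Fin n, (j : ℕ) < k + 1 → i j = x j then (1:ℝ) else 0)
              * p ^ (∑ j, |i j - x j|) * h i) * (p - p⁻¹)
          = (if ∀ j : Fin n, (j : ℕ) < k → i j = (x + e) j then (1:ℝ) else 0)
              * p ^ (∑ j, |i j - (x + e) j|) * h i
            + (if ∀ j : Fin n, (j : ℕ) < k → i j = (x - e) j then (1:ℝ) else 0)
              * p ^ (∑ j, |i j - (x - e) j|) * h i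
            - (p + p⁻¹) * ((if ∀ j : Fin n, (j : ℕ) < k → i j = x j then (1:ℝ) else 0)
              * p ^ (∑ j, |i j - x j|) * h i) := by
        intro i
        have hne : ∀ j : Fin n, (j : ℕ) < k → j ≠ j0 := by
          intro j hj hjj; rw [hjj] at hj; simp [hj0def] at hj
        have hiA : (∀ j : Fin n, (j : ℕ) < k → i j = (x + e) j)
            ↔ (∀ j : Fin n, (j : ℕ) < k → i j = x j) := by
          constructor <;> intro hh j hj <;> have hth := hh j hj <;>
            simpa [Pi.add_apply, he1 j (hne j hj)] using hth
        have hiB : (∀ j : Fin n, (j : ℕ) < k → i j = (x - e) j)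
            ↔ (∀ j : Fin n, (j : ℕ) < k → i j = x j) := by
          constructor <;> intro hh j hj <;> have hth := hh j hj <;>
            simpa [Pi.sub_apply, he1 j (hne j hj)] using hth
        have hRA : (∑ j, |i j - (x + e) j|)
            = |i j0 - x j0 - 1| + ∑ j ∈ Finset.univ.erase j0, |i j - x j| := by
          rw [← Finset.add_sum_erase _ _ (Finset.mem_univ j0)]
          congr 1
          · have h1 : i j0 - (x + e) j0 = i j0 - x j0 - 1 := by
              simp only [Pi.add_apply, he0]; ring
            rw [h1]
          · refine Finset.sum_congr rfl fun j hj => ?_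
            have hne' : j ≠ j0 := Finset.ne_of_mem_erase hj
            have h1 : i j - (x + e) j = i j - x j := by
              simp only [Pi.add_apply, he1 j hne']; ring
            rw [h1]
        have hRB : (∑ j, |i j - (x - e) j|)
            = |i j0 - x j0 + 1| + ∑ j ∈ Finset.univ.erase j0, |i j - x j| := by
          rw [← Finset.add_sum_erase _ _ (Finset.mem_univ j0)]
          congr 1
          · have h1 : i j0 - (x - e) j0 = i j0 - x j0 + 1 := by
              simp only [Pi.sub_apply, he0]; ring
            rw [h1]
          · refine Finset.sum_congr rfl fun j hj => ?_
            have hne' : j ≠ j0 := Finset.ne_of_mem_erase hj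
            have h1 : i j - (x - e) j = i j - x j := by
              simp only [Pi.sub_apply, he1 j hne']; ring
            rw [h1]
        have hRC : (∑ j, |i j - x j|)
            = |i j0 - x j0| + ∑ j ∈ Finset.univ.erase j0, |i j - x j| :=
          (Finset.add_sum_erase _ _ (Finset.mem_univ j0)).symm
        simp only [hiA, hiB]
        rw [hRA, hRB, hRC, zpow_add₀ hp, zpow_add₀ hp, zpow_add₀ hp]
        by_cases ha : i j0 - x j0 = 0
        · have hij0 : i j0 = x j0 := by omega
          have hiff : (∀ j : Fin n, (j : ℕ) < k + 1 → i j = x j)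
              ↔ (∀ j : Fin n, (j : ℕ) < k → i j = x j) := by
            constructor
            · exact fun hh j hj => hh j (Nat.lt_succ_of_lt hj)
            · intro hh j hj
              rcases Nat.lt_succ_iff_lt_or_eq.mp hj with hj' | hj'
              · exact hh j hj'
              · have hjj : j = j0 := Fin.val_injective (by simpa [hj0def] using hj')
                rw [hjj]; exact hij0
          simp only [hiff]
          rw [show i j0 - x j0 - 1 = (i j0 - x j0) - 1 from rfl, ha]
          norm_num
          split_ifs <;> ring
        · have hcond : ¬ (∀ j : Fin n, (j : ℕ) < k + 1 → i j = x j) := by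
            intro hh
            exact ha (by rw [hh j0 (Nat.lt_succ_self k)]; ring)
          rw [if_neg hcond]
          have hz := zkey p hp0 (i j0 - x j0)
          rw [if_neg ha, add_zero] at hz
          linear_combination (-((if ∀ j : Fin n, (j : ℕ) < k → i j = x j then (1:ℝ) else 0)
            * p ^ (∑ j ∈ Finset.univ.erase j0, |i j - x j|) * h i)) * hz
      -- combine tsums
      have main :
          (∑' i : Fin n → ℤ,
            (if ∀ j : Fin n, (j : ℕ) < k + 1 → i j = x j then (1:ℝ) else 0)
              * p ^ (∑ j, |i j - x j|) * h i) * (p - p⁻¹) = 0 := by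
        rw [← tsum_mul_right]
        calc (∑' i : Fin n → ℤ,
              ((if ∀ j : Fin n, (j : ℕ) < k + 1 → i j = x j then (1:ℝ) else 0)
                * p ^ (∑ j, |i j - x j|) * h i) * (p - p⁻¹))
            = ∑' i : Fin n → ℤ,
              ((if ∀ j : Fin n, (j : ℕ) < k → i j = (x + e) j then (1:ℝ) else 0)
                  * p ^ (∑ j, |i j - (x + e) j|) * h i
                + (if ∀ j : Fin n, (j : ℕ) < k → i j = (x - e) j then (1:ℝ) else 0)
                  * p ^ (∑ j, |i j - (x - e) j|) * h i
                - (p + p⁻¹) * ((if ∀ j : Fin n, (j : ℕ) < k → i j = x j then (1:ℝ) else 0)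
                  * p ^ (∑ j, |i j - x j|) * h i)) := tsum_congr key
          _ = 0 := by
              rw [Summable.tsum_sub (SA.add SB) (SC.mul_left _), Summable.tsum_add SA SB, tsum_mul_left,
                hA, hB, hC]
              ring
      have hpq : p - p⁻¹ ≠ 0 := by
        have h1 : 1 < p⁻¹ := one_lt_inv_iff₀.mpr ⟨hp0, hp1⟩
        have : p - p⁻¹ < 0 := by linarith
        exact ne_of_lt this
      exact (mul_eq_zero.mp main).resolve_right hpq
  -- conclude
  intro x
  have hvanish : ∀ i : Fin n → ℤ, i ≠ x →
      (if ∀ j : Fin n, (j : ℕ) < n → i j = x j then (1:ℝ) else 0)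
        * p ^ (∑ j, |i j - x j|) * h i = 0 := by
    intro i hix
    rw [if_neg, zero_mul, zero_mul]
    intro hall
    exact hix (funext fun j => hall j j.isLt)
  have hx := H n le_rfl x
  rw [tsum_eq_single x hvanish] at hx
  simpa using hx
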